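/- Let U be a finite-dimensional vector space over a field F, let μ be a fuzzy subspace of U, and let A be a proper subspace of U. If β_A = {x₁, …, x_k} is a fuzzy basis of the restriction μ|A, then there exist vectors x_{k+1}, …, x_n ∈ U such that β = {x₁, …, x_k, x_{k+1}, …, x_n} is a fuzzy basis of μ. -/

import Mathlib

/-- A fuzzy subspace of a vector space `U` over `F`: a function into `[0,1]` with
`μ(x-y) ≥ min (μ x) (μ y)` and `μ(c • x) ≥ μ x`. -/
def IsFuzzySubspace (F : Type*) [Field F] {U : Type*} [AddCommGroup U] [Module F U]
    (μ : U → ℝ) : Prop :=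
  (∀ x, μ x ∈ Set.Icc (0 : ℝ) 1) ∧
  (∀ x y : U, min (μ x) (μ y) ≤ μ (x - y)) ∧
  (∀ (c : F) (x : U), μ x ≤ μ (c • x))

/-- The "fuzzy linear independence" condition on a set `β`: for any nonempty finite set of
distinct vectors of `β` and nonzero scalars, `μ` of the linear combination is the minimum
of the values of `μ` on those vectors. -/
def FuzzyMinOn (F : Type*) [Field F] {U : Type*} [AddCommGroup U] [Module F U]
    (μ : U → ℝ) (β : Set U) : Prop :=
  ∀ (s : Finset U), ↑s ⊆ β → ∀ (hs : s.Nonempty) (c : U → F),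
    (∀ x ∈ s, c x ≠ 0) → μ (∑ x ∈ s, c x • x) = s.inf' hs μ

/-- `β` is a fuzzy basis of the fuzzy subspace `μ` of `U`: an ordinary basis of `U`
satisfying the fuzzy min-condition. -/
def IsFuzzyBasis (F : Type*) [Field F] {U : Type*} [AddCommGroup U] [Module F U]
    (μ : U → ℝ) (β : Set U) : Prop :=
  LinearIndependent F ((↑) : β → U) ∧ Submodule.span F β = ⊤ ∧ FuzzyMinOn F μ β

/-- `β` is a fuzzy basis of the restriction `μ|S`, where `S` is (the carrier of) a subspace:
a linearly independent subset of `S` spanning `S`, satisfying the fuzzy min-condition. -/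
def IsFuzzyBasisOn (F : Type*) [Field F] {U : Type*} [AddCommGroup U] [Module F U]
    (μ : U → ℝ) (S : Set U) (β : Set U) : Prop :=
  β ⊆ S ∧ LinearIndependent F ((↑) : β → U) ∧
    S ⊆ (Submodule.span F β : Submodule F U) ∧ FuzzyMinOn F μ β

/-- Zadeh image of a fuzzy set under a map; the real `sSup` satisfies `sSup ∅ = 0`. -/
noncomputable def fuzzyImage {U V : Type*} (f : U → V) (μ : U → ℝ) : V → ℝ :=
  fun y => sSup (μ '' {x | f x = y})

/-- Level subset of a fuzzy set: `μ_t = {x : μ x ≥ t}`. -/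
def levelSet {U : Type*} (μ : U → ℝ) (t : ℝ) : Set U := {x | t ≤ μ x}

section Aux

variable {F : Type*} [Field F] {U : Type*} [AddCommGroup U] [Module F U]

lemma fz_smul_eq (μ : U → ℝ) (hμ : IsFuzzySubspace F μ) {c : F} (hc : c ≠ 0) (x : U) :
    μ (c • x) = μ x := by
  refine le_antisymm ?_ (hμ.2.2 c x)
  have := hμ.2.2 c⁻¹ (c • x)
  rwa [smul_smul, inv_mul_cancel₀ hc, one_smul] at this

lemma fz_neg (μ : U → ℝ) (hμ : IsFuzzySubspace F μ) (x : U) : μ (-x) = μ x := by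
  have := fz_smul_eq μ hμ (c := (-1 : F)) (by norm_num) x
  simpa using this

lemma fz_add (μ : U → ℝ) (hμ : IsFuzzySubspace F μ) (x y : U) :
    min (μ x) (μ y) ≤ μ (x + y) := by
  have h := hμ.2.1 x (-y)
  rw [fz_neg μ hμ, sub_neg_eq_add] at h
  exact h

lemma fz_le_zero (μ : U → ℝ) (hμ : IsFuzzySubspace F μ) (x : U) : μ x ≤ μ 0 := by
  have := hμ.2.1 x x
  simpa using this

def fzLevel (μ : U → ℝ) (hμ : IsFuzzySubspace F μ) (t : ℝ) (h0 : t ≤ μ 0) :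
    Submodule F U where
  carrier := {x | t ≤ μ x}
  zero_mem' := h0
  add_mem' := fun {a b} ha hb => le_trans (le_min ha hb) (fz_add μ hμ a b)
  smul_mem' := fun c x hx => le_trans hx (hμ.2.2 c x)

lemma fz_finite_range [FiniteDimensional F U] (μ : U → ℝ) (hμ : IsFuzzySubspace F μ) :
    (Set.range μ).Finite := by
  rw [← Set.finite_coe_iff]
  have key : ∀ t : Set.range μ, (t : ℝ) ≤ μ 0 := by
    rintro ⟨t, x, rfl⟩
    exact fz_le_zero μ hμ x
  set n := Module.finrank F U with hn
  have hle : ∀ t : Set.range μ,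
      Module.finrank F (fzLevel μ hμ t (key t)) < n + 1 :=
    fun t => Nat.lt_succ_of_le (Submodule.finrank_le _)
  have anti : ∀ (s t : ℝ) (hs : s ≤ μ 0) (ht : t ≤ μ 0), (∃ x, μ x = s) → s < t →
      Module.finrank F (fzLevel μ hμ t ht) < Module.finrank F (fzLevel μ hμ s hs) := by
    rintro s t hs ht ⟨x, rfl⟩ hst
    refine Submodule.finrank_lt_finrank_of_lt ?_
    rw [SetLike.lt_iff_le_and_exists]
    refine ⟨fun y hy => le_trans (le_of_lt hst) hy, x,
      show x ∈ fzLevel μ hμ (μ x) hs from le_refl (μ x), ?_⟩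
    exact fun h => absurd h (not_le.mpr hst)
  refine Finite.of_injective
    (fun t : Set.range μ => (⟨Module.finrank F (fzLevel μ hμ t (key t)), hle t⟩ : Fin (n+1)))
    ?_
  rintro ⟨s, hsr⟩ ⟨t, htr⟩ hst
  simp only [Fin.mk.injEq] at hst
  by_contra hne
  have hne' : s ≠ t := fun h => hne (Subtype.ext h)
  rcases lt_or_gt_of_ne hne' with h | h
  · exact absurd hst (Nat.ne_of_gt (anti s t (key ⟨s, hsr⟩) (key ⟨t, htr⟩) hsr h))
  · exact absurd hst (Nat.ne_of_lt (anti t s (key ⟨t, htr⟩) (key ⟨s, hsr⟩) htr h))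

lemma fz_step [FiniteDimensional F U] [DecidableEq U] (μ : U → ℝ) (hμ : IsFuzzySubspace F μ)
    (A : Submodule F U) (hA : A ≠ ⊤) (βA : Finset U)
    (hsub : ↑βA ⊆ (A : Set U)) (hli : LinearIndependent F ((↑) : ↑(↑βA : Set U) → U))
    (hspan : (A : Set U) ⊆ (Submodule.span F (↑βA : Set U) : Submodule F U))
    (hmin : ∀ (s : Finset U), ↑s ⊆ (↑βA : Set U) → ∀ (hs : s.Nonempty) (c : U → F),
      (∀ x ∈ s, c x ≠ 0) → μ (∑ x ∈ s, c x • x) = s.inf' hs μ) :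
    ∃ x : U, x ∉ A ∧
      (↑(insert x βA) : Set U) ⊆ ((A ⊔ (F ∙ x) : Submodule F U) : Set U) ∧
      LinearIndependent F ((↑) : ↑(↑(insert x βA) : Set U) → U) ∧
      ((A ⊔ (F ∙ x) : Submodule F U) : Set U) ⊆
        (Submodule.span F (↑(insert x βA) : Set U) : Submodule F U) ∧
      (∀ (s : Finset U), ↑s ⊆ (↑(insert x βA) : Set U) → ∀ (hs : s.Nonempty) (c : U → F),
        (∀ y ∈ s, c y ≠ 0) → μ (∑ y ∈ s, c y • y) = s.inf' hs μ) := by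
  -- pick x ∉ A with μ x maximal
  have hne : ((A : Set U)ᶜ).Nonempty := by
    rcases SetLike.exists_of_lt (lt_of_le_of_ne le_top hA : A < ⊤) with ⟨x, -, hx⟩
    exact ⟨x, hx⟩
  have hTfin : (μ '' ((A : Set U)ᶜ)).Finite :=
    (fz_finite_range μ hμ).subset (Set.image_subset_range μ _)
  obtain ⟨t, ⟨x, hxA, rfl⟩, hmax'⟩ :=
    (show ∃ t ∈ μ '' ((A : Set U)ᶜ), ∀ a ∈ μ '' ((A : Set U)ᶜ), id t ≤ id a → id t = id a from
      (Set.Finite.exists_maximal hTfin (hne.image μ)).imp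
        fun t ht => ⟨ht.1, fun a ha hle => le_antisymm hle (ht.2 ha hle)⟩)
  have hxmax : ∀ y : U, y ∉ A → μ y ≤ μ x := by
    intro y hy
    by_contra h
    have := hmax' (μ y) ⟨y, hy, rfl⟩ (le_of_lt (not_le.mp h))
    simp only [id] at this
    exact (not_le.mp h).ne' this.symm
  have hxβ : x ∉ βA := fun h => hxA (hsub h)
  have hxspan : x ∉ Submodule.span F (↑βA : Set U) := by
    intro h
    exact hxA (Submodule.span_le.mpr hsub h)
  refine ⟨x, hxA, ?_, ?_, ?_, ?_⟩
  · -- subset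
    rw [Finset.coe_insert]
    rintro y (rfl | hy)
    · exact Submodule.mem_sup_right (Submodule.mem_span_singleton_self y)
    · exact Submodule.mem_sup_left (hsub hy)
  · -- linear independence
    rw [Finset.coe_insert]
    exact LinearIndepOn.insert (v := id) hli (by simpa using hxspan)
  · -- span
    rw [Finset.coe_insert, Submodule.span_insert]
    have hA' : A ≤ Submodule.span F (↑βA : Set U) := fun y hy => hspan hy
    exact fun y hy =>
      (sup_le (hA'.trans le_sup_right) le_sup_left : A ⊔ (F ∙ x) ≤ _) hy
  · -- fuzzy min condition
    intro s hs hsne c hc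
    rw [Finset.coe_insert] at hs
    by_cases hxs : x ∈ s
    · -- x is in s
      have hserase : ↑(s.erase x) ⊆ (↑βA : Set U) := by
        intro y hy
        rcases Finset.mem_erase.mp (Finset.mem_coe.mp hy) with ⟨hyx, hys⟩
        rcases Set.mem_insert_iff.mp (hs (Finset.mem_coe.mpr hys)) with h | h
        · exact absurd h hyx
        · exact h
      have hsum : ∑ y ∈ s, c y • y = c x • x + ∑ y ∈ s.erase x, c y • y :=
        (Finset.add_sum_erase s (fun y => c y • y) hxs).symm
      have hcx : c x ≠ 0 := hc x hxs
      have hμw : μ (c x • x) = μ x := fz_smul_eq μ hμ hcx x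
      by_cases h0 : (s.erase x).Nonempty
      · -- nontrivial part in A
        have hinf : s.inf' hsne μ = min (μ x) ((s.erase x).inf' h0 μ) := by
          refine le_antisymm (le_min (Finset.inf'_le μ hxs)
            (Finset.le_inf' h0 μ fun y hy => Finset.inf'_le μ (Finset.mem_of_mem_erase hy)))
            (Finset.le_inf' hsne μ fun y hy => ?_)
          by_cases hyx : y = x
          · subst hyx; exact min_le_left _ _
          · exact le_trans (min_le_right _ _)
              (Finset.inf'_le μ (Finset.mem_erase.mpr ⟨hyx, hy⟩))
        set v := ∑ y ∈ s.erase x, c y • y with hv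
        set w := c x • x with hw
        have hvA : v ∈ A := Submodule.sum_mem A (fun y hy =>
          Submodule.smul_mem A _ (hsub (hserase hy)))
        have hwA : w ∉ A := by
          intro hwmem
          have : x ∈ A := by
            have := Submodule.smul_mem A (c x)⁻¹ hwmem
            rwa [hw, smul_smul, inv_mul_cancel₀ hcx, one_smul] at this
          exact hxA this
        have hvwA : w + v ∉ A := by
          intro h
          exact hwA (by simpa using A.sub_mem h hvA)
        have hμv : μ v = (s.erase x).inf' h0 μ :=
          hmin (s.erase x) hserase h0 c (fun y hy => hc y (Finset.mem_of_mem_erase hy))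
        rw [hsum, hinf, ← hμv]
        -- goal : μ (w + v) = min (μ x) (μ v)
        rcases le_or_gt (μ x) (μ v) with hcase | hcase
        · rw [min_eq_left hcase]
          refine le_antisymm (hxmax _ hvwA) ?_
          have := fz_add μ hμ w v
          rw [hμw, min_eq_left hcase] at this
          exact this
        · rw [min_eq_right hcase.le]
          have hge : μ v ≤ μ (w + v) := by
            have := fz_add μ hμ w v
            rw [hμw, min_eq_right hcase.le] at this
            exact this
          refine le_antisymm ?_ hge
          by_contra hlt
          push_neg at hlt
          have hkey := hμ.2.1 (w + v) w
          rw [add_sub_cancel_left, hμw] at hkey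
          exact absurd (lt_of_lt_of_le (lt_min hlt hcase) hkey) (lt_irrefl _)
      · -- s = {x}
        rw [Finset.not_nonempty_iff_eq_empty] at h0
        have hsx : s = {x} := by
          have := Finset.insert_erase hxs
          rw [h0] at this
          simpa using this.symm
        subst hsx
        simp [hμw]
    · -- x ∉ s : old condition applies
      have : ↑s ⊆ (↑βA : Set U) := by
        intro y hy
        rcases Set.mem_insert_iff.mp (hs hy) with h | h
        · exact absurd (Finset.mem_coe.mp (h ▸ hy)) hxs
        · exact h
      exact hmin s this hsne c hc

end Aux

lemma fz_ext_aux {F : Type*} [Field F] {U : Type*} [AddCommGroup U] [Module F U]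
    [FiniteDimensional F U] [DecidableEq U] (μ : U → ℝ) (hμ : IsFuzzySubspace F μ) :
    ∀ n : ℕ, ∀ A : Submodule F U, ∀ βA : Finset U,
      Module.finrank F U - Module.finrank F A ≤ n →
      IsFuzzyBasisOn F μ (A : Set U) (↑βA : Set U) →
      ∃ β : Finset U, βA ⊆ β ∧ IsFuzzyBasis F μ (↑β : Set U) := by
  intro n
  induction n with
  | zero =>
    intro A βA h0 hβ
    have hA : A = ⊤ := Submodule.eq_top_of_finrank_eq
      (le_antisymm (Submodule.finrank_le A) (by omega))
    refine ⟨βA, Finset.Subset.refl _, hβ.2.1, ?_, hβ.2.2.2⟩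
    exact eq_top_iff.mpr fun y _ => hβ.2.2.1 (by simp [hA])
  | succ n ih =>
    intro A βA hle hβ
    by_cases hA : A = ⊤
    · refine ⟨βA, Finset.Subset.refl _, hβ.2.1, ?_, hβ.2.2.2⟩
      exact eq_top_iff.mpr fun y _ => hβ.2.2.1 (by simp [hA])
    · obtain ⟨x, hxA, h1, h2, h3, h4⟩ := fz_step μ hμ A hA βA hβ.1 hβ.2.1 hβ.2.2.1 hβ.2.2.2
      have hlt : Module.finrank F A < Module.finrank F (A ⊔ (F ∙ x) : Submodule F U) :=
        Submodule.finrank_lt_finrank_of_lt (lt_of_le_of_ne le_sup_left (fun h => hxA (by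
          rw [h]; exact Submodule.mem_sup_right (Submodule.mem_span_singleton_self x))))
      have hfr : Module.finrank F U - Module.finrank F (A ⊔ (F ∙ x) : Submodule F U) ≤ n := by
        omega
      obtain ⟨β, hβsub, hβbasis⟩ := ih (A ⊔ (F ∙ x)) (insert x βA) hfr ⟨h1, h2, h3, h4⟩
      exact ⟨β, (Finset.subset_insert x βA).trans hβsub, hβbasis⟩

/-- In a finite-dimensional space, a fuzzy basis of the restriction of `μ`
to a proper subspace `A` extends to a fuzzy basis of `μ`. -/
theorem fuzzyBasisOn_extend
    {F : Type*} [Field F] {U : Type*} [AddCommGroup U] [Module F U]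
    [FiniteDimensional F U] (μ : U → ℝ) (hμ : IsFuzzySubspace F μ)
    (A : Submodule F U) (hA : A ≠ ⊤)
    (βA : Finset U) (hβA : IsFuzzyBasisOn F μ (A : Set U) (↑βA : Set U)) :
    ∃ β : Finset U, βA ⊆ β ∧ IsFuzzyBasis F μ (↑β : Set U) := by
  classical
  exact fz_ext_aux μ hμ (Module.finrank F U) A βA (Nat.sub_le _ _) hβA
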